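/- arXiv:1902.06957 — 2 statements merged into one kernel-verified Lean document; each statement's English description precedes it below -/
import Mathlib

section
/- Consider an instance of Space Cover on the dual of a perturbed graphic matroid: a loopless finite multigraph G, a matrix P over GF(2) with rows indexed by V(G) and columns indexed by E(G), A = I(G) + P, a terminal set T ⊆ E(G), and a non-negative integer k. If there exists F ⊆ E(G)∖T with |F| ≤ k such that for every e ∈ T there is a subset F_e ⊆ F for which the characteristic vector of F_e ∪ {e} (a vector in GF(2)^{E(G)}) lies in the GF(2)-span of the set of rows of A, then there exist a parity restriction h and a set S ⊆ E(G)∖T that is a solution compatible with h. -/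
open Matrix

variable {V E : Type*}

/-- The incidence matrix over GF(2) of the loopless multigraph with vertex set `V`,
edge set `E` and endpoint maps `x y : E → V`. -/
def incMatrix [DecidableEq V] (x y : E → V) : Matrix V E (ZMod 2) :=
  fun v e => if v = x e ∨ v = y e then 1 else 0

/-- The set of distinct rows `R_1, …, R_t` of the matrix `P`. -/
def RowsOf (P : Matrix V E (ZMod 2)) : Set (E → ZMod 2) := Set.range fun v : V => P v

/-- For an assignment `B` of a bit to each distinct row of `P` (a vector in `GF(2)^t`),
`sumVec P B = ∑_{i=1}^t b_i • R_i ∈ GF(2)^{E}`. -/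
noncomputable def sumVec (P : Matrix V E (ZMod 2)) (B : (E → ZMod 2) → ZMod 2) :
    E → ZMod 2 :=
  ∑ᶠ r ∈ RowsOf P, B r • r

/-- `X ⊆ V(G)` is compatible with `B` if `|X ∩ V_i| ≡ b_i (mod 2)` for every distinct row
`R_i` of `P`, where `V_i = {v : P_v = R_i}`. -/
def CompatibleWith (P : Matrix V E (ZMod 2)) (X : Set V)
    (B : (E → ZMod 2) → ZMod 2) : Prop :=
  ∀ r ∈ RowsOf P, (({v ∈ X | P v = r}.ncard : ZMod 2)) = B r

/-- The edge `e` is expensive with respect to `(B, (X, X̄))`: writing `r̃` for the entry of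
`sumVec P B` at `e`, either both endpoints lie in `X` and `r̃ = 1`, or both lie in `X̄` and
`r̃ = 1`, or exactly one endpoint lies in `X` and `r̃ = 0`. -/
def Expensive (x y : E → V) (P : Matrix V E (ZMod 2))
    (B : (E → ZMod 2) → ZMod 2) (X : Set V) (e : E) : Prop :=
  (x e ∈ X ∧ y e ∈ X ∧ sumVec P B e = 1) ∨
  (x e ∉ X ∧ y e ∉ X ∧ sumVec P B e = 1) ∨
  (((x e ∈ X ∧ y e ∉ X) ∨ (x e ∉ X ∧ y e ∈ X)) ∧ sumVec P B e = 0)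

/-- The partition `(X, X̄)` is good with respect to `(B, e)`: `X` is compatible with `B`,
`e` is expensive, and every edge of `T ∖ {e}` is cheap. -/
def GoodPartition (x y : E → V) (P : Matrix V E (ZMod 2)) (T : Set E)
    (B : (E → ZMod 2) → ZMod 2) (e : E) (X : Set V) : Prop :=
  CompatibleWith P X B ∧ Expensive x y P B X e ∧
    ∀ e' ∈ T, e' ≠ e → ¬ Expensive x y P B X e'

/-- `S ⊆ E(G) ∖ T` is a solution compatible with the parity restriction `h`: `|S| ≤ k` and
for every terminal `e ∈ T` there is a partition `(X_e, X̄_e)` of `V(G)` that is good with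
respect to `(h e, e)` such that every edge expensive with respect to `(h e, (X_e, X̄_e))`
other than `e` belongs to `S`. -/
def SolutionCompatible (x y : E → V) (P : Matrix V E (ZMod 2)) (T : Set E) (k : ℕ)
    (h : E → (E → ZMod 2) → ZMod 2) (S : Set E) : Prop :=
  S.ncard ≤ k ∧ ∀ e ∈ T, ∃ X : Set V,
    GoodPartition x y P T (h e) e X ∧
    ∀ e' : E, Expensive x y P (h e) X e' → e' ≠ e → e' ∈ S

/-- The characteristic vector of a set `F ⊆ E`, as a vector in GF(2)^E. -/
noncomputable def charVec (F : Set E) : E → ZMod 2 := F.indicator 1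

/-!
Write the GF(2)-combination of rows of `A = I(G) + P` witnessing `e ∈ T` as a sum
`∑_{v ∈ X} A_v`. As `G` is loopless, its entry at an edge `e'` is
`[x e' ∈ X] + [y e' ∈ X] + (∑_{v ∈ X} P_v) e'`, and `∑_{v ∈ X} P_v = sum(B)` for the parities
`b_i = |X ∩ V_i|`, so the entry is `1` exactly when `e'` is expensive with respect to
`(B, (X, X̄))`. Hence the expensive edges are exactly `F_e ∪ {e}`, which makes `(X, X̄)` good for
`(B, e)` and puts every other expensive edge into `F`; take `h e := B` and `S := F`.
-/

open Finset

theorem ZMod.eq_zero_or_eq_one (a : ZMod 2) : a = 0 ∨ a = 1 := by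
  fin_cases a
  exacts [Or.inl rfl, Or.inr rfl]

theorem ZMod.two_sum_smul_eq_sum_filter {ι M : Type*} [AddCommMonoid M] [Module (ZMod 2) M]
    (s : Finset ι) (c : ι → ZMod 2) (f : ι → M) :
    ∑ i ∈ s, c i • f i = ∑ i ∈ s with c i = 1, f i := by
  rw [sum_filter]
  refine sum_congr rfl fun i _ => ?_
  rcases ZMod.eq_zero_or_eq_one (c i) with h | h <;> simp [h]

theorem ZMod.two_exists_finset_sum_eq_of_mem_span_range {ι M : Type*} [Fintype ι]
    [AddCommMonoid M] [Module (ZMod 2) M] {f : ι → M} {m : M}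
    (hm : m ∈ Submodule.span (ZMod 2) (Set.range f)) :
    ∃ X : Finset ι, ∑ i ∈ X, f i = m := by
  classical
  obtain ⟨c, rfl⟩ := Submodule.mem_span_range_iff_exists_fun (ZMod 2) |>.mp hm
  exact ⟨_, (ZMod.two_sum_smul_eq_sum_filter univ c f).symm⟩

theorem charVec_apply_eq_one_iff (F : Set E) (e : E) : charVec F e = 1 ↔ e ∈ F := by
  by_cases h : e ∈ F <;> simp [charVec, h]

open scoped Classical in
noncomputable def rowParities (P : Matrix V E (ZMod 2)) (X : Finset V) : (E → ZMod 2) → ZMod 2 :=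
  fun r => (#{v ∈ X | P v = r} : ZMod 2)

theorem compatibleWith_rowParities (P : Matrix V E (ZMod 2)) (X : Finset V) :
    CompatibleWith P (X : Set V) (rowParities P X) := by
  intro r _
  rw [rowParities, ← Set.ncard_coe_finset, coe_filter]
  rfl

theorem sumVec_rowParities [Fintype V] (P : Matrix V E (ZMod 2)) (X : Finset V) :
    sumVec P (rowParities P X) = ∑ v ∈ X, P v := by
  classical
  have hrows : RowsOf P = ↑(univ.image fun v : V => P v) := by simp [RowsOf]
  have hterm : ∀ r ∈ univ.image (fun v : V => P v),
      rowParities P X r • r = ∑ v ∈ X with P v = r, P v := fun r _ => by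
    rw [rowParities, Nat.cast_smul_eq_nsmul, ← sum_const]
    exact sum_congr rfl fun v hv => ((mem_filter.mp hv).2).symm
  rw [sumVec, hrows, finsum_mem_coe_finset, sum_congr rfl hterm]
  exact sum_fiberwise_of_maps_to (fun v _ => mem_image_of_mem _ (mem_univ v)) _

theorem expensive_iff (x y : E → V) (P : Matrix V E (ZMod 2)) (B : (E → ZMod 2) → ZMod 2)
    (X : Set V) (e : E) :
    Expensive x y P B X e ↔ X.indicator 1 (x e) + X.indicator 1 (y e) + sumVec P B e = 1 := by
  rcases ZMod.eq_zero_or_eq_one (sumVec P B e) with hs | hs <;>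
    by_cases hx : x e ∈ X <;> by_cases hy : y e ∈ X <;>
      simp [Expensive, hs, hx, hy, CharTwo.add_self_eq_zero]

theorem Matrix.sum_rows_apply {ι R : Type*} [AddCommMonoid R] (M : Matrix ι E R)
    (X : Finset ι) (e : E) : (∑ i ∈ X, M i) e = ∑ i ∈ X, M i e :=
  Finset.sum_apply e X M

theorem sum_incMatrix_apply [DecidableEq V] {x y : E → V} {e : E} (hloop : x e ≠ y e)
    (X : Finset V) :
    ∑ v ∈ X, incMatrix x y v e =
      (X : Set V).indicator 1 (x e) + (X : Set V).indicator 1 (y e) := by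
  have hsplit : ∀ v,
      incMatrix x y v e = (if v = x e then 1 else 0) + (if v = y e then 1 else 0) := by
    intro v
    by_cases hvx : v = x e
    · subst hvx; simp [incMatrix, hloop]
    · by_cases hvy : v = y e
      · subst hvy; simp [incMatrix, hloop.symm]
      · simp [incMatrix, hvx, hvy]
  simp only [hsplit, sum_add_distrib, sum_ite_eq', Set.indicator_apply, mem_coe, Pi.one_apply]

theorem expensive_rowParities_iff [Fintype V] [DecidableEq V] {x y : E → V}
    (hloop : ∀ e, x e ≠ y e) (P : Matrix V E (ZMod 2)) (X : Finset V) (e : E) :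
    Expensive x y P (rowParities P X) X e ↔ (∑ v ∈ X, (incMatrix x y + P) v) e = 1 := by
  simp only [Matrix.sum_rows_apply, Matrix.add_apply, sum_add_distrib]
  rw [sum_incMatrix_apply (hloop e), ← Matrix.sum_rows_apply, ← sumVec_rowParities,
    expensive_iff]

theorem exists_goodPartition_of_mem_span [Fintype V] [DecidableEq V] {x y : E → V}
    (hloop : ∀ e, x e ≠ y e) (P : Matrix V E (ZMod 2)) {T F Fe : Set E} (hFT : Disjoint F T)
    (hFe : Fe ⊆ F) {e : E}
    (hspan : charVec (insert e Fe) ∈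
      Submodule.span (ZMod 2) (Set.range fun v : V => (incMatrix x y + P) v)) :
    ∃ (B : (E → ZMod 2) → ZMod 2) (X : Set V), GoodPartition x y P T B e X ∧
      ∀ e', Expensive x y P B X e' → e' ≠ e → e' ∈ F := by
  obtain ⟨X, hX⟩ := ZMod.two_exists_finset_sum_eq_of_mem_span_range hspan
  have hexp : ∀ e', Expensive x y P (rowParities P X) X e' ↔ e' ∈ insert e Fe := fun e' => by
    rw [expensive_rowParities_iff hloop, hX, charVec_apply_eq_one_iff]
  refine ⟨rowParities P X, X, ⟨compatibleWith_rowParities P X, ?_, ?_⟩, ?_⟩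
  · exact (hexp e).mpr (Set.mem_insert e Fe)
  · intro e' he' hne hE
    rcases (hexp e').mp hE with rfl | h
    · exact hne rfl
    · exact Set.disjoint_left.mp hFT (hFe h) he'
  · intro e' hE hne
    exact hFe (((hexp e').mp hE).resolve_left hne)

theorem spaceCoverDualPGM_implies_solutionCompatible_general
    [Fintype V] [DecidableEq V]
    (x y : E → V) (hloop : ∀ e : E, x e ≠ y e)
    (P A : Matrix V E (ZMod 2)) (hA : A = incMatrix x y + P)
    (T : Set E) (k : ℕ)
    (hex : ∃ F : Set E, Disjoint F T ∧ F.ncard ≤ k ∧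
      ∀ e ∈ T, ∃ Fe ⊆ F,
        charVec (insert e Fe) ∈
          Submodule.span (ZMod 2) (Set.range fun v : V => A v)) :
    ∃ (h : E → (E → ZMod 2) → ZMod 2) (S : Set E),
      Disjoint S T ∧ SolutionCompatible x y P T k h S := by
  subst hA
  obtain ⟨F, hFT, hFk, hF⟩ := hex
  have key : ∀ e ∈ T, ∃ (B : (E → ZMod 2) → ZMod 2) (X : Set V),
      GoodPartition x y P T B e X ∧ ∀ e', Expensive x y P B X e' → e' ≠ e → e' ∈ F := by
    intro e he
    obtain ⟨Fe, hFeF, hspan⟩ := hF e he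
    exact exists_goodPartition_of_mem_span hloop P hFT hFeF hspan
  choose! B X hgood hsub using key
  exact ⟨B, F, hFT, hFk, fun e he => ⟨X e, hgood e he, hsub e he⟩⟩

/-- Space Cover on the dual of a perturbed graphic matroid: if there exists
`F ⊆ E(G) ∖ T` with `|F| ≤ k` such that for every `e ∈ T` there is `F_e ⊆ F` whose
characteristic vector together with `e` lies in the GF(2)-span of the rows of
`A = I(G) + P`, then there exist a parity restriction `h` and a set `S ⊆ E(G) ∖ T` that is
a solution compatible with `h`. -/
theorem spaceCoverDualPGM_implies_solutionCompatible
    [Fintype V] [Fintype E] [DecidableEq V]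
    (x y : E → V) (hloop : ∀ e : E, x e ≠ y e)
    (P A : Matrix V E (ZMod 2)) (hA : A = incMatrix x y + P)
    (T : Set E) (k : ℕ)
    (hex : ∃ F : Set E, Disjoint F T ∧ F.ncard ≤ k ∧
      ∀ e ∈ T, ∃ Fe ⊆ F,
        charVec (insert e Fe) ∈
          Submodule.span (ZMod 2) (Set.range fun v : V => A v)) :
    ∃ (h : E → (E → ZMod 2) → ZMod 2) (S : Set E),
      Disjoint S T ∧ SolutionCompatible x y P T k h S :=
  spaceCoverDualPGM_implies_solutionCompatible_general x y hloop P A hA T k hex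
end

section
/- Let G be a loopless finite multigraph, T ⊆ E(G), e ∈ T with an associated function f_e : E(G) → {0,1}, and k a non-negative integer. Then for any two e-preliminary partitions (Z,Z̄) and (Z',Z̄') of V(G), the number of edges of G with one endpoint in (Z∖Z')∪(Z̄∖Z̄') and the other endpoint in (Z∩Z')∪(Z̄∩Z̄') is at most 2(k+1). -/
variable {V E : Type*}

/-- The edge `e'` contributes to `(e₀, (X, X̄))` with respect to `f = f_{e₀}`: both
endpoints of `e'` lie in `X` and `f(e') = 1`, or both lie in `X̄` and `f(e') = 1`, or
exactly one endpoint lies in `X` and `f(e') = 0`. -/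
def Contrib (x y : E → V) (f : E → ZMod 2) (X : Set V) (e' : E) : Prop :=
  (x e' ∈ X ∧ y e' ∈ X ∧ f e' = 1) ∨
  (x e' ∉ X ∧ y e' ∉ X ∧ f e' = 1) ∨
  (((x e' ∈ X ∧ y e' ∉ X) ∨ (x e' ∉ X ∧ y e' ∈ X)) ∧ f e' = 0)

/-- `(Y, Ȳ)` is an `e₀`-preliminary partition: it almost fits `e₀`
(`T ∩ cont(e₀, Y) = {e₀}`) and `|cont(e₀, Y) ∖ {e₀}| ≤ k`. -/
def Preliminary (x y : E → V) (f : E → ZMod 2) (T : Set E) (k : ℕ) (e₀ : E)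
    (Y : Set V) : Prop :=
  Contrib x y f Y e₀ ∧ (∀ e' ∈ T, e' ≠ e₀ → ¬ Contrib x y f Y e') ∧
  {e' : E | Contrib x y f Y e' ∧ e' ≠ e₀}.ncard ≤ k

/-- The set of edges with one endpoint in `X` and the other in `Y`. -/
def CrossEdges (x y : E → V) (X Y : Set V) : Set E :=
  {e : E | (x e ∈ X ∧ y e ∈ Y) ∨ (x e ∈ Y ∧ y e ∈ X)}

/-- The subgraph of the multigraph induced by the vertex set `S` is connected. -/
def InducedConnected (x y : E → V) (S : Set V) : Prop :=
  ∀ u ∈ S, ∀ v ∈ S, Relation.ReflTransGen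
    (fun a b => a ∈ S ∧ b ∈ S ∧ ∃ e : E, (a = x e ∧ b = y e) ∨ (a = y e ∧ b = x e)) u v

/-- `(X, Xᶜ)` is a `(q, p)`-good edge separation: both sides have more than `q` vertices,
at most `p` edges cross the partition, and both induced subgraphs are connected. -/
def GoodEdgeSep (x y : E → V) (q p : ℕ) (X : Set V) : Prop :=
  q < X.ncard ∧ q < Xᶜ.ncard ∧ (CrossEdges x y X Xᶜ).ncard ≤ p ∧
  InducedConnected x y X ∧ InducedConnected x y Xᶜ

/-- The multigraph is `(q, p)`-unbreakable: it has no `(q, p)`-good edge separation. -/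
def Unbreakable (x y : E → V) (q p : ℕ) : Prop :=
  ¬ ∃ X : Set V, GoodEdgeSep x y q p X

/-- Two `e₀`-preliminary partitions `(Z, Z̄)` and `(Z', Z̄')` are `e₀`-aligned:
`|(Z ∖ Z') ∪ (Z̄ ∖ Z̄')| ≤ q` and at most `2(k+1)` edges join
`(Z ∖ Z') ∪ (Z̄ ∖ Z̄')` to `(Z ∩ Z') ∪ (Z̄ ∩ Z̄')`. -/
def Aligned (x y : E → V) (q k : ℕ) (Z Z' : Set V) : Prop :=
  ((Z \ Z') ∪ (Zᶜ \ Z'ᶜ)).ncard ≤ q ∧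
  (CrossEdges x y ((Z \ Z') ∪ (Zᶜ \ Z'ᶜ)) ((Z ∩ Z') ∪ (Zᶜ ∩ Z'ᶜ))).ncard ≤ 2 * (k + 1)

/-- `(Z, Z̄)` and `(Z', Z̄')` are `e₀`-opposite if `(Z̄, Z)` and `(Z', Z̄')` are aligned. -/
def OppositePart (x y : E → V) (q k : ℕ) (Z Z' : Set V) : Prop :=
  Aligned x y q k Zᶜ Z'

/-- `(Z, Z̄)` and `(Z', Z̄')` are `e₀`-close if they are aligned or opposite. -/
def Close (x y : E → V) (q k : ℕ) (Z Z' : Set V) : Prop :=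
  Aligned x y q k Z Z' ∨ OppositePart x y q k Z Z'

/-!
An edge joining the set where the two partitions disagree to the set where they agree crosses
exactly one of `(Z, Z̄)` and `(Z', Z̄')`, so whatever its label it contributes to exactly one of
them. Hence these edges lie in `cont(e₀, Z) ∪ cont(e₀, Z')`, and each of these sets has at most
`k + 1` elements, `e₀` and at most `k` others.
-/

theorem contrib_iff (x y : E → V) (f : E → ZMod 2) (X : Set V) (e : E) :
    Contrib x y f X e ↔ ((x e ∈ X ↔ y e ∈ X) ↔ f e = 1) := by
  have hf : f e = 0 ∨ f e = 1 := by
    generalize f e = a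
    revert a
    decide
  unfold Contrib
  rcases hf with hf | hf <;> simp only [hf] <;> tauto

theorem crossEdges_subset_setOf_contrib_union (x y : E → V) (f : E → ZMod 2) (Z Z' : Set V) :
    CrossEdges x y ((Z \ Z') ∪ (Zᶜ \ Z'ᶜ)) ((Z ∩ Z') ∪ (Zᶜ ∩ Z'ᶜ)) ⊆
      {e | Contrib x y f Z e} ∪ {e | Contrib x y f Z' e} := by
  intro e he
  simp only [CrossEdges, Set.mem_ofPred_eq, Set.mem_union, Set.mem_sdiff, Set.mem_inter_iff,
    Set.mem_compl_iff, not_not] at he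
  simp only [Set.mem_union, Set.mem_ofPred_eq, contrib_iff]
  tauto

theorem ncard_setOf_contrib_le_of_preliminary [Finite E] {x y : E → V} {f : E → ZMod 2}
    {T : Set E} {k : ℕ} {e₀ : E} {Y : Set V} (h : Preliminary x y f T k e₀ Y) :
    {e | Contrib x y f Y e}.ncard ≤ k + 1 := by
  obtain ⟨h₀, -, hk⟩ := h
  rw [← Set.ncard_sdiff_singleton_add_one (s := {e | Contrib x y f Y e}) h₀]
  exact Nat.add_le_add_right hk 1

theorem crossEdges_of_preliminary_partitions_le_general
    [Fintype E]
    (x y : E → V)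
    (T : Set E) (e₀ : E) (f : E → ZMod 2) (k : ℕ)
    (Z Z' : Set V)
    (hZ : Preliminary x y f T k e₀ Z) (hZ' : Preliminary x y f T k e₀ Z') :
    (CrossEdges x y ((Z \ Z') ∪ (Zᶜ \ Z'ᶜ)) ((Z ∩ Z') ∪ (Zᶜ ∩ Z'ᶜ))).ncard
      ≤ 2 * (k + 1) :=
  calc _ ≤ ({e | Contrib x y f Z e} ∪ {e | Contrib x y f Z' e}).ncard :=
        Set.ncard_le_ncard (crossEdges_subset_setOf_contrib_union x y f Z Z')
    _ ≤ {e | Contrib x y f Z e}.ncard + {e | Contrib x y f Z' e}.ncard := Set.ncard_union_le _ _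
    _ ≤ 2 * (k + 1) := by
        have := ncard_setOf_contrib_le_of_preliminary hZ
        have := ncard_setOf_contrib_le_of_preliminary hZ'
        omega

/-- Let `G` be a loopless finite multigraph, `T ⊆ E(G)`, `e₀ ∈ T` with
associated function `f`, and `k ∈ ℕ`. For any two `e₀`-preliminary partitions `(Z, Z̄)`
and `(Z', Z̄')` of `V(G)`, the number of edges with one endpoint in
`(Z ∖ Z') ∪ (Z̄ ∖ Z̄')` and the other in `(Z ∩ Z') ∪ (Z̄ ∩ Z̄')` is at most `2(k+1)`. -/
theorem crossEdges_of_preliminary_partitions_le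
    [Fintype V] [Fintype E]
    (x y : E → V) (hloop : ∀ e : E, x e ≠ y e)
    (T : Set E) (e₀ : E) (he₀ : e₀ ∈ T) (f : E → ZMod 2) (k : ℕ)
    (Z Z' : Set V)
    (hZ : Preliminary x y f T k e₀ Z) (hZ' : Preliminary x y f T k e₀ Z') :
    (CrossEdges x y ((Z \ Z') ∪ (Zᶜ \ Z'ᶜ)) ((Z ∩ Z') ∪ (Zᶜ ∩ Z'ᶜ))).ncard
      ≤ 2 * (k + 1) :=
  crossEdges_of_preliminary_partitions_le_general x y T e₀ f k Z Z' hZ hZ'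
end
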